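/- For a nonidentity element w of a free partially commutative monoid M, the signed count Σ (−1)^{|Q|} over all cliques Q such that w_Q is a left factor of w (i.e., w = w_Q · w' for some w' ∈ M) equals 0; for w the identity this sum equals 1. -/

import Mathlib

open scoped Classical

/-- The relation generating a free partially commutative (trace) monoid:
`x_a x_b = x_b x_a` for `(a,b)` in the commutation set `I`. -/
def traceRel (n : ℕ) (I : Set (Fin n × Fin n)) :
    FreeMonoid (Fin n) → FreeMonoid (Fin n) → Prop := fun u v =>
  ∃ a b, (a, b) ∈ I ∧ u = FreeMonoid.of a * FreeMonoid.of b ∧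
    v = FreeMonoid.of b * FreeMonoid.of a

/-- The congruence generated by the commutation relations. -/
abbrev traceCon (n : ℕ) (I : Set (Fin n × Fin n)) : Con (FreeMonoid (Fin n)) :=
  conGen (traceRel n I)

/-- The free partially commutative monoid `⟨x_1,…,x_n⟩/≃_I`. -/
abbrev TraceMonoid (n : ℕ) (I : Set (Fin n × Fin n)) := (traceCon n I).Quotient

/-- The generator `x_i` as an element of the trace monoid. -/
def gen {n : ℕ} {I : Set (Fin n × Fin n)} (i : Fin n) : TraceMonoid n I :=
  (traceCon n I).mk' (FreeMonoid.of i)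

/-- A clique of the trace monoid: a set of generators which pairwise commute. -/
def IsMClique {n : ℕ} (I : Set (Fin n × Fin n)) (Q : Finset (Fin n)) : Prop :=
  ∀ a ∈ Q, ∀ b ∈ Q, a ≠ b → Commute (gen (I := I) a) (gen (I := I) b)

/-- The canonical word `w_Q` in the trace monoid associated to a finite set of
generators (taking the product in increasing order). -/
def wordOf {n : ℕ} (I : Set (Fin n × Fin n)) (Q : Finset (Fin n)) : TraceMonoid n I :=
  (traceCon n I).mk' (FreeMonoid.ofList (Q.sort (· ≤ ·)))

/-- The Cauchy product of two formal power series on a monoid. -/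
noncomputable def cauchy {M : Type*} [Monoid M] (f g : M → ℤ) : M → ℤ := fun w =>
  ∑ᶠ p : M × M, if p.1 * p.2 = w then f p.1 * g p.2 else 0

/-- The unit of the ring of formal power series: the characteristic function
of the identity. -/
noncomputable def deltaOne {M : Type*} [Monoid M] : M → ℤ := fun w => if w = 1 then 1 else 0

/-- The clique polynomial `μ_M = Σ_Q (−1)^{|Q|} [Q]` of a trace monoid. -/
noncomputable def cliqueSeries (n : ℕ) (I : Set (Fin n × Fin n)) : TraceMonoid n I → ℤ :=
  fun w => ∑ Q ∈ (Finset.univ : Finset (Fin n)).powerset.filter (IsMClique I),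
    if wordOf I Q = w then (-1 : ℤ) ^ Q.card else 0

/-!
Call `a` an initial letter of `w` if `x_a` is a left factor of `w`. The key step is a Levi-type
lemma: if `x_a u = x_b v` with `a ≠ b`, then `x_a` and `x_b` commute and `x_b` is a left factor
of `u`; it is read off from the images of both sides in the free monoid on `{a, b}`, which are
well defined as soon as `a` and `b` do not commute. Hence the initial letters of `w` form a
clique, and `w_Q` is a left factor of `w` exactly when `Q` consists of initial letters. The sum
is therefore `∑_{Q ⊆ S} (-1)^|Q|` for the set `S` of initial letters, which vanishes unless `S`
is empty, that is, unless `w = 1`.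
-/

open FreeMonoid

def FreeMonoid.filterHom {α : Type*} (p : α → Prop) [DecidablePred p] :
    FreeMonoid α →* FreeMonoid α where
  toFun u := ofList (u.toList.filter p)
  map_one' := rfl
  map_mul' u v := by rw [toList_mul, List.filter_append, ofList_append]

namespace TraceMonoid

variable {n : ℕ} {I : Set (Fin n × Fin n)}

lemma commute_gen_of_mem {a b : Fin n} (h : (a, b) ∈ I) : Commute (gen (I := I) a) (gen b) := by
  change (traceCon n I).mk' (of a * of b) = (traceCon n I).mk' (of b * of a)
  exact (Con.eq _).2 (ConGen.Rel.of _ _ ⟨a, b, h, rfl, rfl⟩)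

lemma mk'_eq_lift_gen : (traceCon n I).mk' = FreeMonoid.lift gen :=
  FreeMonoid.hom_eq fun _ => rfl

lemma mk'_ofList (l : List (Fin n)) : (traceCon n I).mk' (ofList l) = (l.map gen).prod := by
  rw [mk'_eq_lift_gen, lift_ofList]

lemma exists_list_prod_eq (x : TraceMonoid n I) : ∃ l : List (Fin n), (l.map gen).prod = x := by
  obtain ⟨u, rfl⟩ := (traceCon n I).mk'_surjective x
  exact ⟨u.toList, by rw [← mk'_ofList, ofList_toList]⟩

def proj (p : Fin n → Prop) [DecidablePred p] (hp : ∀ a b, (a, b) ∈ I → p a → p b → a = b) :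
    TraceMonoid n I →* FreeMonoid (Fin n) :=
  (traceCon n I).lift (filterHom p) <| Con.conGen_le.2 <| by
    rintro _ _ ⟨a, b, hab, rfl, rfl⟩
    change ofList ((of a * of b).toList.filter p) = ofList ((of b * of a).toList.filter p)
    by_cases ha : p a <;> by_cases hb : p b
    · rw [hp a b hab ha hb]
    all_goals simp [toList_mul, ha, hb]

lemma proj_list_prod (p : Fin n → Prop) [DecidablePred p]
    (hp : ∀ a b, (a, b) ∈ I → p a → p b → a = b) (l : List (Fin n)) :
    proj p hp (l.map gen).prod = ofList (l.filter p) := by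
  rw [← mk'_ofList]; rfl

lemma exists_eq_append_cons_of_gen_dvd {a : Fin n} {v : List (Fin n)}
    (h : gen a ∣ (v.map (gen (I := I))).prod) :
    ∃ s t, v = s ++ a :: t ∧ ∀ b ∈ s, Commute (gen (I := I) a) (gen b) := by
  obtain ⟨x, hx⟩ := h
  obtain ⟨u, rfl⟩ := exists_list_prod_eq x
  have filter_eq : ∀ (p : Fin n → Prop) [DecidablePred p]
      (hp : ∀ a b, (a, b) ∈ I → p a → p b → a = b), p a →
      v.filter p = a :: u.filter p := by
    intro p _ hp ha
    have := congrArg (proj p hp) hx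
    rw [← List.prod_cons, ← List.map_cons, proj_list_prod, proj_list_prod] at this
    rw [ofList.injective this, List.filter_cons_of_pos (by simpa using ha)]
  have hav : a ∈ v := by
    have := filter_eq (· = a) (fun _ _ _ hx hy => hx.trans hy.symm) rfl
    exact (List.mem_filter.1 (this ▸ List.mem_cons_self)).1
  obtain ⟨s, t, rfl, has⟩ := List.eq_append_cons_of_mem hav
  refine ⟨s, t, rfl, fun b hb => ?_⟩
  -- Otherwise the projection to `{a, b}` of the left side starts with `a`, of the right with `b`.
  by_contra hab
  have hfilter := filter_eq (fun c => c = a ∨ c = b) (by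
    rintro x y hxy (rfl | rfl) (rfl | rfl)
    · rfl
    · exact absurd (commute_gen_of_mem hxy) hab
    · exact absurd (commute_gen_of_mem hxy).symm hab
    · rfl) (Or.inl rfl)
  obtain ⟨c, l, hsc⟩ := List.exists_cons_of_ne_nil (List.ne_nil_of_mem
    (List.mem_filter.2 ⟨hb, by simp⟩ : b ∈ s.filter fun c => c = a ∨ c = b))
  rw [List.filter_append, hsc, List.cons_append, List.cons.injEq] at hfilter
  have hcs : c ∈ s := (List.mem_filter.1 (hsc ▸ List.mem_cons_self)).1
  exact has (hfilter.1 ▸ hcs)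

lemma commute_and_gen_dvd_of_gen_mul_eq {a b : Fin n} {x y : TraceMonoid n I} (hab : a ≠ b)
    (h : gen a * x = gen b * y) : Commute (gen (I := I) a) (gen b) ∧ gen b ∣ x := by
  obtain ⟨l, rfl⟩ := exists_list_prod_eq x
  obtain ⟨s, t, hst, hcomm⟩ := exists_eq_append_cons_of_gen_dvd (v := a :: l)
    ⟨y, by rw [List.map_cons, List.prod_cons, h]⟩
  obtain _ | ⟨c, s⟩ := s
  · exact absurd (List.cons.inj hst).1 hab
  rw [List.cons_append, List.cons.injEq] at hst
  obtain ⟨rfl, rfl⟩ := hst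
  refine ⟨(hcomm a List.mem_cons_self).symm, (s.map gen).prod * (t.map gen).prod, ?_⟩
  have hbs : Commute (gen b) (s.map (gen (I := I))).prod :=
    Commute.list_prod_right _ _ fun _ hx => by
      obtain ⟨d, hd, rfl⟩ := List.mem_map.1 hx
      exact hcomm d (List.mem_cons_of_mem _ hd)
  rw [List.map_append, List.prod_append, List.map_cons, List.prod_cons, ← mul_assoc,
    ← hbs.eq, mul_assoc]

noncomputable def initialLetters (w : TraceMonoid n I) : Finset (Fin n) := {a | gen a ∣ w}

lemma mem_initialLetters {a : Fin n} {w : TraceMonoid n I} :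
    a ∈ initialLetters w ↔ gen a ∣ w := by
  simp [initialLetters]

lemma isMClique_initialLetters (w : TraceMonoid n I) : IsMClique I (initialLetters w) := by
  intro a ha b hb hab
  obtain ⟨x, hx⟩ := mem_initialLetters.1 ha
  obtain ⟨y, hy⟩ := mem_initialLetters.1 hb
  exact (commute_and_gen_dvd_of_gen_mul_eq hab (hx.symm.trans hy)).1

lemma initialLetters_eq_empty_iff {w : TraceMonoid n I} : initialLetters w = ∅ ↔ w = 1 := by
  constructor
  · intro hw
    obtain ⟨_ | ⟨a, l⟩, rfl⟩ := exists_list_prod_eq w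
    · rfl
    · have : a ∈ initialLetters ((a :: l).map (gen (I := I))).prod :=
        mem_initialLetters.2 ⟨(l.map gen).prod, by rw [List.map_cons, List.prod_cons]⟩
      exact absurd (hw ▸ this) (Finset.notMem_empty a)
  · rintro rfl
    refine Finset.eq_empty_of_forall_notMem fun a ha => ?_
    obtain ⟨s, t, h, -⟩ := exists_eq_append_cons_of_gen_dvd (v := [])
      (by simpa using mem_initialLetters.1 ha)
    simp at h

lemma _root_.IsMClique.subset {Q Q' : Finset (Fin n)} (h : Q' ⊆ Q) (hQ : IsMClique I Q) :
    IsMClique I Q' :=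
  fun a ha b hb hab => hQ a (h ha) b (h hb) hab

lemma wordOf_eq_prod (Q : Finset (Fin n)) :
    wordOf I Q = ((Q.sort (· ≤ ·)).map gen).prod :=
  mk'_ofList _

lemma wordOf_insert {a : Fin n} {Q : Finset (Fin n)} (ha : a ∉ Q)
    (hQ : IsMClique I (insert a Q)) : wordOf I (insert a Q) = gen a * wordOf I Q := by
  have hperm : ((insert a Q).sort (· ≤ ·)).map (gen (I := I)) |>.Perm
      ((a :: Q.sort (· ≤ ·)).map gen) :=
    ((Finset.sort_perm_toList _ _).trans
      ((Finset.toList_insert ha).trans ((Finset.sort_perm_toList _ _).symm.cons a))).map _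
  have hcomm : ((insert a Q).sort (· ≤ ·)).map (gen (I := I)) |>.Pairwise Commute :=
    List.pairwise_map.2 <| (Finset.sort_nodup _ _).imp_of_mem fun hb hc hbc =>
      hQ _ ((Finset.mem_sort _).1 hb) _ ((Finset.mem_sort _).1 hc) hbc
  rw [wordOf_eq_prod, wordOf_eq_prod, hperm.prod_eq' hcomm, List.map_cons, List.prod_cons]

lemma gen_dvd_wordOf {a : Fin n} {Q : Finset (Fin n)} (hQ : IsMClique I Q) (ha : a ∈ Q) :
    gen a ∣ wordOf I Q := by
  rw [← Finset.insert_erase ha, wordOf_insert (Finset.notMem_erase a Q)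
    ((Finset.insert_erase ha).symm ▸ hQ)]
  exact dvd_mul_right _ _

lemma wordOf_dvd_of_subset_initialLetters {Q : Finset (Fin n)} {w : TraceMonoid n I}
    (h : Q ⊆ initialLetters w) : wordOf I Q ∣ w := by
  induction Q using Finset.induction_on generalizing w with
  | empty => simp [wordOf_eq_prod]
  | insert a Q ha ih =>
    obtain ⟨x, rfl⟩ := mem_initialLetters.1 (h (Finset.mem_insert_self a Q))
    have hQx : Q ⊆ initialLetters x := fun b hb => by
      obtain ⟨y, hy⟩ := mem_initialLetters.1 (h (Finset.mem_insert_of_mem hb))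
      exact mem_initialLetters.2
        (commute_and_gen_dvd_of_gen_mul_eq (ne_of_mem_of_not_mem hb ha).symm hy).2
    rw [wordOf_insert ha ((isMClique_initialLetters _).subset h)]
    exact mul_dvd_mul_left _ (ih hQx)

lemma isMClique_and_wordOf_dvd_iff {Q : Finset (Fin n)} {w : TraceMonoid n I} :
    IsMClique I Q ∧ wordOf I Q ∣ w ↔ Q ⊆ initialLetters w := by
  refine ⟨fun ⟨hQ, hw⟩ a ha => mem_initialLetters.2 ((gen_dvd_wordOf hQ ha).trans hw),
    fun h => ⟨(isMClique_initialLetters w).subset h, wordOf_dvd_of_subset_initialLetters h⟩⟩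

lemma filter_isMClique_wordOf_dvd_eq_powerset (w : TraceMonoid n I) :
    (Finset.univ.powerset.filter fun Q => IsMClique I Q ∧ wordOf I Q ∣ w) =
      (initialLetters w).powerset := by
  ext Q
  simp [isMClique_and_wordOf_dvd_iff]

end TraceMonoid

/-- For a nonidentity element w of a free partially commutative monoid, the
signed count Σ (−1)^{|Q|} over all cliques Q whose word w_Q is a left factor
of w equals 0; for w the identity it equals 1. -/
theorem stmt_2 (n : ℕ) (I : Set (Fin n × Fin n)) (w : TraceMonoid n I) :
    (∑ Q ∈ (Finset.univ : Finset (Fin n)).powerset.filter (IsMClique I),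
      if ∃ w' : TraceMonoid n I, wordOf I Q * w' = w then (-1 : ℤ) ^ Q.card else 0) =
      (if w = 1 then 1 else 0) := by
  have left_factor_iff : ∀ Q, (∃ w', wordOf I Q * w' = w) ↔ wordOf I Q ∣ w :=
    fun _ => exists_congr fun _ => eq_comm
  simp_rw [left_factor_iff]
  rw [← Finset.sum_filter, Finset.filter_filter,
    TraceMonoid.filter_isMClique_wordOf_dvd_eq_powerset, Finset.sum_powerset_neg_one_pow_card]
  simp_rw [TraceMonoid.initialLetters_eq_empty_iff]
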